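/- If the DLAL_B judgment ;⊢ t : §ⁿBool is derivable (t closed, n ∈ ℕ), then t is not a λ-abstraction. -/
import Mathlib


namespace DLALB

/-! ## DLAL_B types -/

inductive Ty where
  | tvar : ℕ → Ty
  | lolli : Ty → Ty → Ty      -- A ⊸ B
  | arr : Ty → Ty → Ty        -- A ⇒ B
  | para : Ty → Ty            -- §A
  | all : ℕ → Ty → Ty         -- ∀α.A
  | bool : Ty
deriving DecidableEq

def Ty.fv : Ty → Finset ℕ
  | .tvar a => {a}
  | .lolli A B => A.fv ∪ B.fv
  | .arr A B => A.fv ∪ B.fv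
  | .para A => A.fv
  | .all a A => A.fv \ {a}
  | .bool => ∅

/-- Type substitution A[B/α]. -/
def Ty.substTy : Ty → ℕ → Ty → Ty
  | .tvar b, a, B => if b = a then B else .tvar b
  | .lolli A C, a, B => .lolli (A.substTy a B) (C.substTy a B)
  | .arr A C, a, B => .arr (A.substTy a B) (C.substTy a B)
  | .para A, a, B => .para (A.substTy a B)
  | .all b A, a, B => if b = a then .all b A else .all b (A.substTy a B)
  | .bool, _, _ => .bool

/-- §ⁿA -/
def paraN : ℕ → Ty → Ty
  | 0, A => A
  | n+1, A => .para (paraN n A)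

/-! ## Terms of Λ_B -/

inductive Tm where
  | var : ℕ → Tm
  | tt : Tm                    -- T
  | ff : Tm                    -- F
  | lam : ℕ → Tm → Tm
  | app : Tm → Tm → Tm
  | ite : Tm → Tm → Tm → Tm    -- if _ then _ else _
deriving DecidableEq

def Tm.fv : Tm → Finset ℕ
  | .var x => {x}
  | .tt => ∅
  | .ff => ∅
  | .lam x t => t.fv \ {x}
  | .app t u => t.fv ∪ u.fv
  | .ite a b c => a.fv ∪ b.fv ∪ c.fv

/-- Substitution t[u/x]. -/
def Tm.subst : Tm → ℕ → Tm → Tm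
  | .var y, x, u => if y = x then u else .var y
  | .tt, _, _ => .tt
  | .ff, _, _ => .ff
  | .lam y t, x, u => if y = x then .lam y t else .lam y (t.subst x u)
  | .app t s, x, u => .app (t.subst x u) (s.subst x u)
  | .ite a b c, x, u => .ite (a.subst x u) (b.subst x u) (c.subst x u)

/-- Size of a term. -/
def Tm.size : Tm → ℕ
  | .var _ => 1
  | .tt => 1
  | .ff => 1
  | .lam _ t => t.size + 1
  | .app t u => t.size + u.size + 1
  | .ite a b c => a.size + b.size + c.size + 1

/-- Number of occurrences no(x,t) (with max over the branches of an if). -/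
def noOcc (x : ℕ) : Tm → ℕ
  | .var y => if y = x then 1 else 0
  | .tt => 0
  | .ff => 0
  | .lam _ t => noOcc x t
  | .app t u => noOcc x t + noOcc x u
  | .ite a b c => max (noOcc x a) (max (noOcc x b) (noOcc x c))

/-! ## Contexts -/

abbrev Ctx := List (ℕ × Ty)

def ctxDom (Γ : Ctx) : Finset ℕ := (Γ.map Prod.fst).toFinset

def ctxTyFV (Γ : Ctx) : Finset ℕ := Γ.foldr (fun p s => p.2.fv ∪ s) ∅

/-- §Δ -/
def paraCtx (Γ : Ctx) : Ctx := Γ.map (fun p => (p.1, Ty.para p.2))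

/-! ## DLAL_B typing, with the depth of the derivation recorded.
The depth is the maximal number of (§ i) premises and r.h.s. (⇒ e) premises
in a branch of the derivation. -/

inductive DerD : Ctx → Ctx → Tm → Ty → ℕ → Prop
  | id (x : ℕ) (A : Ty) : DerD [] [(x, A)] (.var x) A 0
  | lolliI {Γ Δ : Ctx} {x : ℕ} {A B : Ty} {t : Tm} {d : ℕ} :
      DerD Γ ((x, A) :: Δ) t B d → DerD Γ Δ (.lam x t) (.lolli A B) d
  | lolliE {Γ₁ Γ₂ Δ₁ Δ₂ : Ctx} {A B : Ty} {t u : Tm} {d₁ d₂ : ℕ} :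
      DerD Γ₁ Δ₁ t (.lolli A B) d₁ → DerD Γ₂ Δ₂ u A d₂ →
      DerD (Γ₁ ++ Γ₂) (Δ₁ ++ Δ₂) (.app t u) B (max d₁ d₂)
  | arrI {Γ Δ : Ctx} {x : ℕ} {A B : Ty} {t : Tm} {d : ℕ} :
      DerD ((x, A) :: Γ) Δ t B d → DerD Γ Δ (.lam x t) (.arr A B) d
  | arrE {Γ Δ : Ctx} {z : ℕ} {A B C : Ty} {t u : Tm} {d₁ d₂ : ℕ} :
      DerD Γ Δ t (.arr A B) d₁ → DerD [] [(z, C)] u A d₂ →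
      DerD ((z, C) :: Γ) Δ (.app t u) B (max d₁ (d₂ + 1))
  | arrE' {Γ Δ : Ctx} {A B : Ty} {t u : Tm} {d₁ d₂ : ℕ} :
      DerD Γ Δ t (.arr A B) d₁ → DerD [] [] u A d₂ →
      DerD Γ Δ (.app t u) B (max d₁ (d₂ + 1))
  | weak {Γ₁ Γ₂ Δ₁ Δ₂ : Ctx} {A : Ty} {t : Tm} {d : ℕ} :
      DerD Γ₁ Δ₁ t A d → DerD (Γ₁ ++ Γ₂) (Δ₁ ++ Δ₂) t A d
  | cntr {Γ Δ : Ctx} {x x₁ x₂ : ℕ} {A B : Ty} {t : Tm} {d : ℕ} :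
      DerD ((x₁, A) :: (x₂, A) :: Γ) Δ t B d →
      DerD ((x, A) :: Γ) Δ ((t.subst x₁ (.var x)).subst x₂ (.var x)) B d
  | paraI {Γ Δ : Ctx} {A : Ty} {t : Tm} {d : ℕ} :
      DerD [] (Γ ++ Δ) t A d → DerD Γ (paraCtx Δ) t (.para A) (d + 1)
  | paraE {Γ₁ Γ₂ Δ₁ Δ₂ : Ctx} {x : ℕ} {A B : Ty} {t u : Tm} {d₁ d₂ : ℕ} :
      DerD Γ₁ Δ₁ u (.para A) d₁ → DerD Γ₂ ((x, .para A) :: Δ₂) t B d₂ →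
      DerD (Γ₁ ++ Γ₂) (Δ₁ ++ Δ₂) (t.subst x u) B (max d₁ d₂)
  | allI {Γ Δ : Ctx} {a : ℕ} {A : Ty} {t : Tm} {d : ℕ} :
      DerD Γ Δ t A d → a ∉ ctxTyFV Γ ∪ ctxTyFV Δ → DerD Γ Δ t (.all a A) d
  | allE {Γ Δ : Ctx} {a : ℕ} {A B : Ty} {t : Tm} {d : ℕ} :
      DerD Γ Δ t (.all a A) d → DerD Γ Δ t (A.substTy a B) d
  | bF : DerD [] [] .ff .bool 0
  | bT : DerD [] [] .tt .bool 0
  | bE {Γ Δ : Ctx} {A : Ty} {M₀ M₁ M₂ : Tm} {n d₀ d₁ d₂ : ℕ} :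
      DerD Γ Δ M₀ (paraN n .bool) d₀ → DerD Γ Δ M₁ A d₁ → DerD Γ Δ M₂ A d₂ →
      DerD Γ Δ (.ite M₀ M₁ M₂) A (max d₀ (max d₁ d₂))

/-- Γ;Δ ⊢ t:A is derivable. -/
def Der (Γ Δ : Ctx) (t : Tm) (A : Ty) : Prop := ∃ d, DerD Γ Δ t A d

/-! ## Reductions -/

/-- One step of δβ-reduction (contextual closure of β and δ). -/
inductive Step : Tm → Tm → Prop
  | beta {x : ℕ} {t u : Tm} : Step (.app (.lam x t) u) (t.subst x u)
  | ifT {u v : Tm} : Step (.ite .tt u v) u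
  | ifF {u v : Tm} : Step (.ite .ff u v) v
  | lamC {x : ℕ} {t t' : Tm} : Step t t' → Step (.lam x t) (.lam x t')
  | appL {t t' u : Tm} : Step t t' → Step (.app t u) (.app t' u)
  | appR {t u u' : Tm} : Step u u' → Step (.app t u) (.app t u')
  | ite0 {a a' b c : Tm} : Step a a' → Step (.ite a b c) (.ite a' b c)
  | ite1 {a b b' c : Tm} : Step b b' → Step (.ite a b c) (.ite a b' c)
  | ite2 {a b c c' : Tm} : Step c c' → Step (.ite a b c) (.ite a b c')

/-- One step of β-reduction alone. -/
inductive StepB : Tm → Tm → Prop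
  | beta {x : ℕ} {t u : Tm} : StepB (.app (.lam x t) u) (t.subst x u)
  | lamC {x : ℕ} {t t' : Tm} : StepB t t' → StepB (.lam x t) (.lam x t')
  | appL {t t' u : Tm} : StepB t t' → StepB (.app t u) (.app t' u)
  | appR {t u u' : Tm} : StepB u u' → StepB (.app t u) (.app t u')
  | ite0 {a a' b c : Tm} : StepB a a' → StepB (.ite a b c) (.ite a' b c)
  | ite1 {a b b' c : Tm} : StepB b b' → StepB (.ite a b c) (.ite a b' c)
  | ite2 {a b c c' : Tm} : StepB c c' → StepB (.ite a b c) (.ite a b c')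

/-- One hole contexts. -/
inductive Cx where
  | hole : Cx
  | lam : ℕ → Cx → Cx
  | appL : Cx → Tm → Cx
  | appR : Tm → Cx → Cx
  | ite0 : Cx → Tm → Tm → Cx
  | ite1 : Tm → Cx → Tm → Cx
  | ite2 : Tm → Tm → Cx → Cx

def Cx.fill : Cx → Tm → Tm
  | .hole, s => s
  | .lam x C, s => .lam x (C.fill s)
  | .appL C u, s => .app (C.fill s) u
  | .appR t C, s => .app t (C.fill s)
  | .ite0 C b c, s => .ite (C.fill s) b c
  | .ite1 a C c, s => .ite a (C.fill s) c
  | .ite2 a b C, s => .ite a b (C.fill s)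

/-- One step of δ̄-reduction. -/
inductive DBar : Tm → Tm → Prop
  | toCond {C : Cx} {t₀ t₁ t₂ : Tm} :
      t₀.fv = ∅ → DBar (C.fill (.ite t₀ t₁ t₂)) t₀
  | toThen {C : Cx} {t₀ t₁ t₂ : Tm} :
      t₀.fv = ∅ → DBar (C.fill (.ite t₀ t₁ t₂)) (C.fill t₁)
  | toElse {C : Cx} {t₀ t₁ t₂ : Tm} :
      t₀.fv = ∅ → DBar (C.fill (.ite t₀ t₁ t₂)) (C.fill t₂)

/-! ## Pure λ-terms and System F -/

inductive Lam where
  | var : ℕ → Lam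
  | lam : ℕ → Lam → Lam
  | app : Lam → Lam → Lam
deriving DecidableEq

def Lam.subst : Lam → ℕ → Lam → Lam
  | .var y, x, u => if y = x then u else .var y
  | .lam y t, x, u => if y = x then .lam y t else .lam y (t.subst x u)
  | .app t s, x, u => .app (t.subst x u) (s.subst x u)

/-- β-reduction on pure λ-terms. -/
inductive LamStep : Lam → Lam → Prop
  | beta {x : ℕ} {t u : Lam} : LamStep (.app (.lam x t) u) (t.subst x u)
  | lamC {x : ℕ} {t t' : Lam} : LamStep t t' → LamStep (.lam x t) (.lam x t')
  | appL {t t' u : Lam} : LamStep t t' → LamStep (.app t u) (.app t' u)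
  | appR {t u u' : Lam} : LamStep u u' → LamStep (.app t u) (.app t u')

inductive FTy where
  | tvar : ℕ → FTy
  | arr : FTy → FTy → FTy
  | all : ℕ → FTy → FTy
deriving DecidableEq

def FTy.fv : FTy → Finset ℕ
  | .tvar a => {a}
  | .arr A B => A.fv ∪ B.fv
  | .all a A => A.fv \ {a}

def FTy.substTy : FTy → ℕ → FTy → FTy
  | .tvar b, a, B => if b = a then B else .tvar b
  | .arr A C, a, B => .arr (A.substTy a B) (C.substTy a B)
  | .all b A, a, B => if b = a then .all b A else .all b (A.substTy a B)

abbrev FCtx := List (ℕ × FTy)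

def fctxTyFV (Γ : FCtx) : Finset ℕ := Γ.foldr (fun p s => p.2.fv ∪ s) ∅

/-- Curry-style System F typing. -/
inductive FDer : FCtx → Lam → FTy → Prop
  | var {Γ : FCtx} {x : ℕ} {A : FTy} : (x, A) ∈ Γ → FDer Γ (.var x) A
  | lam {Γ : FCtx} {x : ℕ} {A B : FTy} {t : Lam} :
      FDer ((x, A) :: Γ) t B → FDer Γ (.lam x t) (.arr A B)
  | app {Γ : FCtx} {A B : FTy} {t u : Lam} :
      FDer Γ t (.arr A B) → FDer Γ u A → FDer Γ (.app t u) B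
  | allI {Γ : FCtx} {a : ℕ} {A : FTy} {t : Lam} :
      FDer Γ t A → a ∉ fctxTyFV Γ → FDer Γ t (.all a A)
  | allE {Γ : FCtx} {a : ℕ} {A B : FTy} {t : Lam} :
      FDer Γ t (.all a A) → FDer Γ t (A.substTy a B)

/-! ## The translation (·)* into System F -/

def Ty.star : Ty → FTy
  | .tvar a => .tvar a
  | .lolli A B => .arr A.star B.star
  | .arr A B => .arr A.star B.star
  | .para A => A.star
  | .all a A => .all a A.star
  | .bool => .all 0 (.arr (.tvar 0) (.arr (.tvar 0) (.tvar 0)))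

def Tm.star : Tm → Lam
  | .var x => .var x
  | .ff => .lam 0 (.lam 1 (.var 1))
  | .tt => .lam 0 (.lam 1 (.var 0))
  | .lam x t => .lam x t.star
  | .app t u => .app t.star u.star
  | .ite a b c => .app (.app a.star b.star) c.star

def ctxStar (Γ : Ctx) : FCtx := Γ.map (fun p => (p.1, p.2.star))

/-! ## Stratified terms -/

inductive STm where
  | var : ℕ → STm
  | tt : STm
  | ff : STm
  /-- `lam x k bang t` is λᵏx.t, or λ^{k!}x.t when `bang = true`. -/
  | lam : ℕ → ℕ → Bool → STm → STm
  /-- `app bang t u` is t u, or t ! u when `bang = true`. -/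
  | app : Bool → STm → STm → STm
  | ite : STm → STm → STm → STm
deriving DecidableEq

def STm.fv : STm → Finset ℕ
  | .var x => {x}
  | .tt => ∅
  | .ff => ∅
  | .lam x _ _ t => t.fv \ {x}
  | .app _ t u => t.fv ∪ u.fv
  | .ite a b c => a.fv ∪ b.fv ∪ c.fv

def STm.subst : STm → ℕ → STm → STm
  | .var y, x, u => if y = x then u else .var y
  | .tt, _, _ => .tt
  | .ff, _, _ => .ff
  | .lam y k bg t, x, u => if y = x then .lam y k bg t else .lam y k bg (t.subst x u)
  | .app bg t s, x, u => .app bg (t.subst x u) (s.subst x u)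
  | .ite a b c, x, u => .ite (a.subst x u) (b.subst x u) (c.subst x u)

/-- t[+1] : all abstraction depths increased by 1. -/
def STm.shift : STm → STm
  | .var x => .var x
  | .tt => .tt
  | .ff => .ff
  | .lam x k bg t => .lam x (k + 1) bg t.shift
  | .app bg t u => .app bg t.shift u.shift
  | .ite a b c => .ite a.shift b.shift c.shift

/-- Number of occurrences of a variable in a stratified term. -/
def noOccS (x : ℕ) : STm → ℕ
  | .var y => if y = x then 1 else 0
  | .tt => 0
  | .ff => 0
  | .lam _ _ _ t => noOccS x t
  | .app _ t u => noOccS x t + noOccS x u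
  | .ite a b c => max (noOccS x a) (max (noOccS x b) (noOccS x c))

/-- Number of occurrences of abstractions at depth k. -/
def noAtS (k : ℕ) : STm → ℕ
  | .var _ => 0
  | .tt => 0
  | .ff => 0
  | .lam _ p _ t => (if p = k then 1 else 0) + noAtS k t
  | .app _ t u => noAtS k t + noAtS k u
  | .ite a b c => max (noAtS k a) (max (noAtS k b) (noAtS k c))

/-- Number of occurrences of the if constructor. -/
def noIfS : STm → ℕ
  | .var _ => 0
  | .tt => 0
  | .ff => 0
  | .lam _ _ _ t => noIfS t
  | .app _ t u => noIfS t + noIfS u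
  | .ite a b c => max (noIfS a) (max (noIfS b) (noIfS c)) + 1

/-- Subterm relation on stratified terms. -/
inductive SSub : STm → STm → Prop
  | refl (t : STm) : SSub t t
  | lam {s t : STm} {x k : ℕ} {bg : Bool} : SSub s t → SSub s (.lam x k bg t)
  | appL {s t u : STm} {bg : Bool} : SSub s t → SSub s (.app bg t u)
  | appR {s t u : STm} {bg : Bool} : SSub s u → SSub s (.app bg t u)
  | ite0 {s a b c : STm} : SSub s a → SSub s (.ite a b c)
  | ite1 {s a b c : STm} : SSub s b → SSub s (.ite a b c)
  | ite2 {s a b c : STm} : SSub s c → SSub s (.ite a b c)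

/-- Stratified DLAL_B typing. -/
inductive SDer : Ctx → Ctx → STm → Ty → Prop
  | id (x : ℕ) (A : Ty) : SDer [] [(x, A)] (.var x) A
  | lolliI {Γ Δ : Ctx} {x : ℕ} {A B : Ty} {t : STm} :
      SDer Γ ((x, A) :: Δ) t B → SDer Γ Δ (.lam x 0 false t) (.lolli A B)
  | lolliE {Γ₁ Γ₂ Δ₁ Δ₂ : Ctx} {A B : Ty} {t u : STm} :
      SDer Γ₁ Δ₁ t (.lolli A B) → SDer Γ₂ Δ₂ u A →
      SDer (Γ₁ ++ Γ₂) (Δ₁ ++ Δ₂) (.app false t u) B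
  | arrI {Γ Δ : Ctx} {x : ℕ} {A B : Ty} {t : STm} :
      SDer ((x, A) :: Γ) Δ t B → SDer Γ Δ (.lam x 0 true t) (.arr A B)
  | arrE {Γ Δ : Ctx} {z : ℕ} {A B C : Ty} {t u : STm} :
      SDer Γ Δ t (.arr A B) → SDer [] [(z, C)] u A →
      SDer ((z, C) :: Γ) Δ (.app true t u.shift) B
  | arrE' {Γ Δ : Ctx} {A B : Ty} {t u : STm} :
      SDer Γ Δ t (.arr A B) → SDer [] [] u A →
      SDer Γ Δ (.app true t u.shift) B
  | weak {Γ₁ Γ₂ Δ₁ Δ₂ : Ctx} {A : Ty} {t : STm} :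
      SDer Γ₁ Δ₁ t A → SDer (Γ₁ ++ Γ₂) (Δ₁ ++ Δ₂) t A
  | cntr {Γ Δ : Ctx} {x x₁ x₂ : ℕ} {A B : Ty} {t : STm} :
      SDer ((x₁, A) :: (x₂, A) :: Γ) Δ t B →
      SDer ((x, A) :: Γ) Δ ((t.subst x₁ (.var x)).subst x₂ (.var x)) B
  | paraI {Γ Δ : Ctx} {A : Ty} {t : STm} :
      SDer [] (Γ ++ Δ) t A → SDer Γ (paraCtx Δ) t.shift (.para A)
  | paraE {Γ₁ Γ₂ Δ₁ Δ₂ : Ctx} {x : ℕ} {A B : Ty} {t u : STm} :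
      SDer Γ₁ Δ₁ u (.para A) → SDer Γ₂ ((x, .para A) :: Δ₂) t B →
      SDer (Γ₁ ++ Γ₂) (Δ₁ ++ Δ₂) (t.subst x u) B
  | allI {Γ Δ : Ctx} {a : ℕ} {A : Ty} {t : STm} :
      SDer Γ Δ t A → a ∉ ctxTyFV Γ ∪ ctxTyFV Δ → SDer Γ Δ t (.all a A)
  | allE {Γ Δ : Ctx} {a : ℕ} {A B : Ty} {t : STm} :
      SDer Γ Δ t (.all a A) → SDer Γ Δ t (A.substTy a B)
  | bF : SDer [] [] .ff .bool
  | bT : SDer [] [] .tt .bool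
  | bE {Γ Δ : Ctx} {A : Ty} {M₀ M₁ M₂ : STm} {n : ℕ} :
      SDer Γ Δ M₀ (paraN n .bool) → SDer Γ Δ M₁ A → SDer Γ Δ M₂ A →
      SDer Γ Δ (.ite M₀ M₁ M₂) A

/-! ## The measure.
`meas m r k a b` is measure_(k-1)(a, b) of the paper, for vectors of
dimension k+1 (so `meas m r (d+1)` is measure_(d) on vectors of dimension d+2,
and `meas m r 0` is measure_(-1) on vectors of dimension 1). -/

def meas (m r : ℕ) : (k : ℕ) → (Fin (k + 1) → ℤ) → (Fin (k + 1) → ℤ) → ℤ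
  | 0, a, _ => a 0
  | k + 1, a, b =>
      meas m r k
        (fun j => a j.succ + ((r : ℤ) + 1) * (b j.succ + a 0 * (m : ℤ)) * a 0)
        (fun j => b j.succ + a 0 * (m : ℤ))

/-- t_k(a,b). -/
def tVec (d m r k : ℕ) (a b : Fin (d + 2) → ℤ) : Fin (d + 2) → ℤ :=
  fun j => if (j : ℕ) < k then a j
           else if (j : ℕ) = k then a j - 1
           else a j + (r : ℤ) * (b j + (m : ℤ))

/-- u_k(a). -/
def uVec (d k : ℕ) (a : Fin (d + 2) → ℤ) : Fin (d + 2) → ℤ :=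
  fun j => if (j : ℕ) = k then a j - 1 else a j

/-- v_k(b). -/
def vVec (d m k : ℕ) (b : Fin (d + 2) → ℤ) : Fin (d + 2) → ℤ :=
  fun j => if (j : ℕ) ≤ k then b j else b j + (m : ℤ)

/-! ## The abstract alternating machine K_B -/

/-- A context 𝒜 of the machine: a list of assignments x := t. -/
abbrev Assoc := List (ℕ × Tm)

/-- N₀ N₁ ... N_p. -/
def appList (t : Tm) : List Tm → Tm
  | [] => t
  | u :: l => appList (.app t u) l

/-- `x` is a fresh variable w.r.t. the context `A` and the subject `t`. -/
def FreshFor (x : ℕ) (A : Assoc) (t : Tm) : Prop :=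
  x ∉ A.map Prod.fst ∧ (∀ p ∈ A, x ∉ (p.2 : Tm).fv) ∧ x ∉ t.fv

/-- Configurations; `true` stands for yes and `false` for no. -/
inductive Config where
  | accept : Config
  | reject : Config
  | ex : Assoc → Bool → Tm → Config
  | uni : Assoc → Bool → Tm → Bool → Tm → Config

/-- Transitions of the machine K_B. -/
inductive KStep : Config → Config → Prop
  | beta {A : Assoc} {b : Bool} {x x' : ℕ} {N N₁ : Tm} {rest : List Tm} :
      FreshFor x' A (appList (.app (.lam x N) N₁) rest) →
      KStep (.ex A b (appList (.app (.lam x N) N₁) rest))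
            (.ex (A ++ [(x', N₁)]) b (appList (N.subst x (.var x')) rest))
  | head {A₁ A₂ : Assoc} {b : Bool} {x : ℕ} {N : Tm} {args : List Tm} :
      KStep (.ex (A₁ ++ (x, N) :: A₂) b (appList (.var x) args))
            (.ex (A₁ ++ (x, N) :: A₂) b (appList N args))
  | ifYes {A : Assoc} {b : Bool} {M₀ M₁ M₂ : Tm} {args : List Tm} :
      KStep (.ex A b (appList (.ite M₀ M₁ M₂) args))
            (.uni A true M₀ b (appList M₁ args))
  | ifNo {A : Assoc} {b : Bool} {M₀ M₁ M₂ : Tm} {args : List Tm} :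
      KStep (.ex A b (appList (.ite M₀ M₁ M₂) args))
            (.uni A false M₀ b (appList M₂ args))
  | if'L {A : Assoc} {a b : Bool} {M₀ N : Tm} :
      KStep (.uni A a M₀ b N) (.ex A a M₀)
  | if'R {A : Assoc} {a b : Bool} {M₀ N : Tm} :
      KStep (.uni A a M₀ b N) (.ex A b N)
  | accT {A : Assoc} : KStep (.ex A true .tt) .accept
  | accF {A : Assoc} : KStep (.ex A false .ff) .accept
  | rejT {A : Assoc} : KStep (.ex A false .tt) .reject
  | rejF {A : Assoc} : KStep (.ex A true .ff) .reject

/-- Accepted configurations: Accepting is accepted; an existential configuration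
is accepted if some successor is accepted; a universal configuration is accepted
if both of its successors are accepted. -/
inductive Accepted : Config → Prop
  | accept : Accepted .accept
  | ex {A : Assoc} {b : Bool} {t : Tm} {c : Config} :
      KStep (.ex A b t) c → Accepted c → Accepted (.ex A b t)
  | uni {A : Assoc} {a b : Bool} {M₀ N : Tm} :
      Accepted (.ex A a M₀) → Accepted (.ex A b N) →
      Accepted (.uni A a M₀ b N)


/-- Head shape of a type: true iff, after stripping §'s and ∀'s, the head is
⊸ or ⇒. Types of λ-abstractions always satisfy this; `paraN n bool` never. -/
def headOk : Ty → Prop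
  | .tvar _ => False
  | .lolli _ _ => True
  | .arr _ _ => True
  | .para A => headOk A
  | .all _ A => headOk A
  | .bool => False

lemma headOk_substTy {A : Ty} (a : ℕ) (B : Ty) (h : headOk A) :
    headOk (A.substTy a B) := by
  induction A with
  | tvar b => exact absurd h id
  | lolli A C ihA ihC => simp [Ty.substTy, headOk]
  | arr A C ihA ihC => simp [Ty.substTy, headOk]
  | para A ih => exact ih h
  | all b A ih =>
      simp only [Ty.substTy]
      split
      · exact h
      · exact ih h
  | bool => exact absurd h id

lemma not_headOk_paraN (n : ℕ) : ¬ headOk (paraN n .bool) := by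
  induction n with
  | zero => exact id
  | succ n ih => exact ih

/-- With empty Γ, the type of a variable is tied to the *first* entry of Δ,
which is named by that variable. -/
lemma var_lemma {Γ Δ : Ctx} {t : Tm} {B : Ty} {d : ℕ}
    (h : DerD Γ Δ t B d) :
    Γ = [] → ∀ y, t = Tm.var y →
      ∃ C Δ', Δ = (y, C) :: Δ' ∧ (headOk C → headOk B) := by
  induction h with
  | id x A =>
      rintro _ y hy
      cases hy
      exact ⟨A, [], rfl, id⟩
  | lolliI _ _ => rintro _ y ⟨⟩
  | lolliE _ _ _ _ => rintro _ y ⟨⟩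
  | arrI _ _ => rintro _ y ⟨⟩
  | arrE _ _ _ _ => rintro _ y ⟨⟩
  | arrE' _ _ _ _ => rintro _ y ⟨⟩
  | weak _ ih =>
      rintro hΓ y rfl
      rcases List.append_eq_nil_iff.mp hΓ with ⟨h1, _⟩
      obtain ⟨C, Δ', hΔ, himp⟩ := ih h1 y rfl
      exact ⟨C, Δ' ++ _, by rw [hΔ]; rfl, himp⟩
  | cntr _ _ => rintro ⟨⟩
  | @paraI Γ Δ A t d _ ih =>
      rintro rfl y rfl
      obtain ⟨C, Δ', hΔ, himp⟩ := ih rfl y rfl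
      simp only [List.nil_append] at hΔ
      subst hΔ
      exact ⟨Ty.para C, paraCtx Δ', rfl, himp⟩
  | @paraE Γ₁ Γ₂ Δ₁ Δ₂ x A B t u d₁ d₂ h1 h2 ih1 ih2 =>
      rintro hΓ y hsub
      rcases List.append_eq_nil_iff.mp hΓ with ⟨hΓ1, hΓ2⟩
      cases t with
      | var z =>
          by_cases hzx : z = x
          · subst hzx
            simp only [Tm.subst, if_pos rfl] at hsub
            subst hsub
            obtain ⟨C1, Δ1', hΔ1, himp1⟩ := ih1 hΓ1 y rfl
            obtain ⟨C2, Δ2', hΔ2, himp2⟩ := ih2 hΓ2 z rfl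
            simp only [List.cons.injEq, Prod.mk.injEq] at hΔ2
            have hC2 : C2 = Ty.para A := hΔ2.1.2.symm
            refine ⟨C1, Δ1' ++ Δ₂, by rw [hΔ1]; rfl, fun hc => himp2 ?_⟩
            rw [hC2]; exact himp1 hc
          · simp only [Tm.subst, if_neg hzx] at hsub
            cases hsub
            obtain ⟨C2, Δ2', hΔ2, himp2⟩ := ih2 hΓ2 y rfl
            simp only [List.cons.injEq, Prod.mk.injEq] at hΔ2
            exact absurd hΔ2.1.1.symm hzx
      | tt => simp [Tm.subst] at hsub
      | ff => simp [Tm.subst] at hsub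
      | lam z s =>
          simp only [Tm.subst] at hsub
          split at hsub <;> cases hsub
      | app a b => simp [Tm.subst] at hsub
      | ite a b c => simp [Tm.subst] at hsub
  | allI _ _ ih =>
      rintro hΓ y rfl
      obtain ⟨C, Δ', hΔ, himp⟩ := ih hΓ y rfl
      exact ⟨C, Δ', hΔ, himp⟩
  | allE _ ih =>
      rintro hΓ y rfl
      obtain ⟨C, Δ', hΔ, himp⟩ := ih hΓ y rfl
      exact ⟨C, Δ', hΔ, fun hc => headOk_substTy _ _ (himp hc)⟩
  | bF => rintro _ y ⟨⟩
  | bT => rintro _ y ⟨⟩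
  | bE _ _ _ _ _ _ => rintro _ y ⟨⟩

/-- With empty Γ, the type of a λ-abstraction always satisfies `headOk`. -/
lemma lam_lemma {Γ Δ : Ctx} {t : Tm} {B : Ty} {d : ℕ}
    (h : DerD Γ Δ t B d) :
    Γ = [] → ∀ x s, t = Tm.lam x s → headOk B := by
  induction h with
  | id x A => rintro _ x s ⟨⟩
  | lolliI _ _ => intro _ _ _ _; trivial
  | lolliE _ _ _ _ => rintro _ x s ⟨⟩
  | arrI _ _ => intro _ _ _ _; trivial
  | arrE _ _ _ _ => rintro _ x s ⟨⟩
  | arrE' _ _ _ _ => rintro _ x s ⟨⟩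
  | weak _ ih =>
      rintro hΓ x s rfl
      rcases List.append_eq_nil_iff.mp hΓ with ⟨h1, _⟩
      exact ih h1 x s rfl
  | cntr _ _ => rintro ⟨⟩
  | paraI _ ih =>
      rintro rfl x s rfl
      exact ih rfl x s rfl
  | @paraE Γ₁ Γ₂ Δ₁ Δ₂ x A B t u d₁ d₂ h1 h2 ih1 ih2 =>
      rintro hΓ y s hsub
      rcases List.append_eq_nil_iff.mp hΓ with ⟨hΓ1, hΓ2⟩
      cases t with
      | var z =>
          by_cases hzx : z = x
          · subst hzx
            simp only [Tm.subst, if_pos rfl] at hsub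
            have hpa : headOk (Ty.para A) := ih1 hΓ1 y s hsub
            obtain ⟨C2, Δ2', hΔ2, himp2⟩ := var_lemma h2 hΓ2 z rfl
            simp only [List.cons.injEq, Prod.mk.injEq] at hΔ2
            have hC2 : C2 = Ty.para A := hΔ2.1.2.symm
            apply himp2
            rw [hC2]; exact hpa
          · simp only [Tm.subst, if_neg hzx] at hsub
            cases hsub
      | tt => simp [Tm.subst] at hsub
      | ff => simp [Tm.subst] at hsub
      | lam z w =>
          exact ih2 hΓ2 z w rfl
      | app a b => simp [Tm.subst] at hsub
      | ite a b c => simp [Tm.subst] at hsub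
  | allI _ _ ih =>
      rintro hΓ x s rfl
      exact ih hΓ x s rfl
  | allE _ ih =>
      rintro hΓ x s rfl
      exact headOk_substTy _ _ (ih hΓ x s rfl)
  | bF => rintro _ x s ⟨⟩
  | bT => rintro _ x s ⟨⟩
  | bE _ _ _ _ _ _ => rintro _ x s ⟨⟩

/-- A closed term of type §ⁿBool is not an abstraction. -/
theorem bool_not_abstraction (t : Tm) (n : ℕ)
    (h : Der [] [] t (paraN n .bool)) :
    ∀ (x : ℕ) (u : Tm), t ≠ .lam x u := by
  intro x u hEq
  obtain ⟨d, hd⟩ := h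
  exact not_headOk_paraN n (lam_lemma hd rfl x u hEq)

end DLALB
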